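/- arXiv:1503.04571 — 5 statements merged into one kernel-verified Lean document; each statement's English description precedes it below -/
import Mathlib

section
/- For any convex body K in R^n with inradius r(K), the packing density satisfies δ(K) ≤ (vol(K) / (r(K)^n · vol(B^n))) · δ(B^n). -/
open MeasureTheory
open scoped ENNReal

/-- A family of isometric copies `φ i '' K` forms a packing if the interiors of distinct
copies are pairwise disjoint. -/
def IsPacking {n : ℕ} (K : Set (EuclideanSpace ℝ (Fin n))) {ι : Type}
    (φ : ι → (EuclideanSpace ℝ (Fin n) ≃ᵢ EuclideanSpace ℝ (Fin n))) : Prop :=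
  Pairwise fun i j => Disjoint (interior (φ i '' K)) (interior (φ j '' K))

/-- The (upper) density of a packing: the `limsup`, as `R → ∞`, of the proportion of the
ball of radius `R` covered by the packing. -/
noncomputable def packingUpperDensity {n : ℕ} (K : Set (EuclideanSpace ℝ (Fin n))) {ι : Type}
    (φ : ι → (EuclideanSpace ℝ (Fin n) ≃ᵢ EuclideanSpace ℝ (Fin n))) : ℝ≥0∞ :=
  Filter.limsup
    (fun R : ℝ => volume ((⋃ i, φ i '' K) ∩ Metric.closedBall 0 R) /
      volume (Metric.closedBall (0 : EuclideanSpace ℝ (Fin n)) R))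
    Filter.atTop

/-- The packing density `δ(K)`: the supremum of the upper densities of all packings of `ℝⁿ`
by congruent copies of `K`. -/
noncomputable def packingDensity {n : ℕ} (K : Set (EuclideanSpace ℝ (Fin n))) : ℝ≥0∞ :=
  ⨆ (ι : Type) (φ : ι → (EuclideanSpace ℝ (Fin n) ≃ᵢ EuclideanSpace ℝ (Fin n)))
    (_ : IsPacking K φ), packingUpperDensity K φ
/-!
Let `closedBall c r ⊆ K` be an inscribed ball of maximal radius `r = r(K)`. In a packing by
copies `φ i '' K`, the balls `φ i '' closedBall c r` form a packing of balls of radius `r`; after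
translating and rescaling by `r⁻¹` it becomes a packing of unit balls of the same upper density.
Each copy of `K` has `vol K / vol (closedBall c r)` times the volume of its ball, and copies
meeting `closedBall 0 R` keep their balls inside `closedBall 0 (R + diam K)`. Hence the density
of the packing of `K` is at most `vol K / (rⁿ vol Bⁿ)` times that of the ball packing: enlarging
the radius by the constant `diam K` does not change the `limsup`, since
`vol (closedBall 0 (R + D)) / vol (closedBall 0 R) → 1`.
-/

open Metric Filter Set
open scoped Pointwise Topology

section Inradius

variable {X : Type*} [PseudoMetricSpace X]

noncomputable def inradius (K : Set X) : ℝ :=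
  sSup {ρ : ℝ | 0 ≤ ρ ∧ ∃ c : X, closedBall c ρ ⊆ K}

lemma le_infDist_compl_of_closedBall_subset {K : Set X} (hK : Kᶜ.Nonempty) {c : X} {ρ : ℝ}
    (h : closedBall c ρ ⊆ K) : ρ ≤ infDist c Kᶜ :=
  (le_infDist hK).2 fun _ hy => le_of_not_ge fun hle => hy (h (mem_closedBall'.2 hle))

end Inradius

-- The inradius is the maximum over `K` of the distance to `Kᶜ`, attained by compactness.
lemma IsCompact.exists_closedBall_inradius_subset {E : Type*} [NormedAddCommGroup E]
    [NormedSpace ℝ E] [Nontrivial E] {K : Set E} (hK : IsCompact K)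
    (hKint : (interior K).Nonempty) : 0 < inradius K ∧ ∃ c, closedBall c (inradius K) ⊆ K := by
  obtain ⟨x, hx⟩ := hKint
  have hKc : Kᶜ.Nonempty :=
    nonempty_compl.2 fun h => NormedSpace.unbounded_univ ℝ E (h ▸ hK.isBounded)
  obtain ⟨c, hcK, hmax⟩ :=
    hK.exists_isMaxOn ⟨x, interior_subset hx⟩ (continuous_infDist_pt Kᶜ).continuousOn
  have hball : closedBall c (infDist c Kᶜ) ⊆ K :=
    (closedBall_infDist_compl_subset_closure hcK).trans hK.isClosed.closure_subset
  have hpos : 0 < infDist c Kᶜ := by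
    refine lt_of_lt_of_le ?_ (hmax (interior_subset hx))
    rw [← infDist_pos_iff_notMem_closure hKc, closure_compl]
    exact fun h => h hx
  have hbound : ∀ ρ ∈ {ρ : ℝ | 0 ≤ ρ ∧ ∃ c : E, closedBall c ρ ⊆ K}, ρ ≤ infDist c Kᶜ :=
    fun ρ ⟨hρ, c', hc'⟩ =>
      (le_infDist_compl_of_closedBall_subset hKc hc').trans (hmax (hc' (mem_closedBall_self hρ)))
  have hmem : infDist c Kᶜ ∈ {ρ : ℝ | 0 ≤ ρ ∧ ∃ c : E, closedBall c ρ ⊆ K} := ⟨hpos.le, c, hball⟩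
  have hr : inradius K = infDist c Kᶜ :=
    le_antisymm (csSup_le ⟨_, hmem⟩ hbound) (le_csSup ⟨_, hbound⟩ hmem)
  exact ⟨hr ▸ hpos, c, hr ▸ hball⟩

lemma Isometry.volume_image {V : Type*} [NormedAddCommGroup V] [InnerProductSpace ℝ V]
    [MeasurableSpace V] [BorelSpace V] [FiniteDimensional ℝ V] {f : V → V} (hf : Isometry f)
    (s : Set V) : volume (f '' s) = volume s := by
  rw [← InnerProductSpace.euclideanHausdorffMeasure_eq_volume, hf.euclideanHausdorffMeasure_image]

section AddHaar

variable {E : Type*} [NormedAddCommGroup E] [NormedSpace ℝ E] [MeasurableSpace E] [BorelSpace E]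
  [FiniteDimensional ℝ E] (μ : Measure E) [μ.IsAddHaarMeasure]

lemma tendsto_measure_closedBall_add_div_measure_closedBall (x : E) (D : ℝ) :
    Tendsto (fun R => μ (closedBall x (R + D)) / μ (closedBall x R)) atTop (𝓝 1) := by
  have hlim :
      Tendsto (fun R : ℝ => ENNReal.ofReal ((1 + D / R) ^ Module.finrank ℝ E)) atTop (𝓝 1) := by
    simpa using ENNReal.tendsto_ofReal
      (((tendsto_const_nhds.div_atTop tendsto_id).const_add 1).pow (Module.finrank ℝ E))
  refine hlim.congr' ?_
  filter_upwards [eventually_gt_atTop 0, eventually_gt_atTop (-D)] with R hR hRD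
  rw [μ.addHaar_closedBall' x (by linarith), μ.addHaar_closedBall' x hR.le,
    ENNReal.mul_div_mul_right _ _ (measure_closedBall_pos μ 0 one_pos).ne'
      measure_closedBall_lt_top.ne, ← ENNReal.ofReal_div_of_pos (by positivity), ← div_pow,
    add_div, div_self hR.ne']

lemma limsup_measure_inter_closedBall_add_div_le (A : Set E) (D : ℝ) :
    limsup (fun R => μ (A ∩ closedBall 0 (R + D)) / μ (closedBall 0 R)) atTop ≤
      limsup (fun R => μ (A ∩ closedBall 0 R) / μ (closedBall 0 R)) atTop := by
  set F := fun R => μ (A ∩ closedBall 0 R) / μ (closedBall 0 R)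
  set g := fun R => μ (closedBall (0 : E) (R + D)) / μ (closedBall 0 R)
  have hg : limsup g atTop = 1 :=
    (tendsto_measure_closedBall_add_div_measure_closedBall μ 0 D).limsup_eq
  have hsplit : (fun R => μ (A ∩ closedBall 0 (R + D)) / μ (closedBall 0 R)) =ᶠ[atTop]
      (F ∘ (· + D)) * g := by
    filter_upwards [eventually_gt_atTop (-D)] with R hRD
    simp only [F, g, Function.comp, Pi.mul_apply]
    rw [← mul_div_assoc, ENNReal.div_mul_cancel (measure_closedBall_pos μ 0 (by linarith)).ne'
      measure_closedBall_lt_top.ne]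
  calc limsup (fun R => μ (A ∩ closedBall 0 (R + D)) / μ (closedBall 0 R)) atTop
      = limsup ((F ∘ (· + D)) * g) atTop := limsup_congr hsplit
    _ ≤ limsup (F ∘ (· + D)) atTop * limsup g atTop :=
        ENNReal.limsup_mul_le' (.inr (by simp [hg])) (.inr (by simp [hg]))
    _ = limsup F atTop := by rw [hg, mul_one, limsup_comp, map_add_atTop_eq]

end AddHaar

lemma IsometryEquiv.image_trans {α β γ : Type*} [PseudoEMetricSpace α] [PseudoEMetricSpace β]
    [PseudoEMetricSpace γ] (g : α ≃ᵢ β) (f : β ≃ᵢ γ) (A : Set α) :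
    g.trans f '' A = f '' (g '' A) :=
  (image_image f g A).symm

namespace IsometryEquiv

variable {E : Type*} [NormedAddCommGroup E] [NormedSpace ℝ E]

noncomputable def conjSMul {a : ℝ} (ha : a ≠ 0) (f : E ≃ᵢ E) : E ≃ᵢ E where
  toFun x := a • f (a⁻¹ • x)
  invFun y := a • f.symm (a⁻¹ • y)
  left_inv x := by simp [smul_smul, ha]
  right_inv y := by simp [smul_smul, ha]
  isometry_toFun := Isometry.of_dist_eq fun x y => by
    rw [dist_smul₀, f.dist_eq, dist_smul₀, ← mul_assoc, norm_inv,
      mul_inv_cancel₀ (norm_ne_zero_iff.2 ha), one_mul]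

lemma image_smul_conjSMul {a : ℝ} (ha : a ≠ 0) (f : E ≃ᵢ E) (A : Set E) :
    conjSMul ha f '' (a • A) = a • f '' A := by
  simp only [← image_smul, image_image]
  exact image_congr fun x _ => by simp [conjSMul, smul_smul, ha]

end IsometryEquiv

section Packing

variable {n : ℕ} {ι : Type} {K Q : Set (EuclideanSpace ℝ (Fin n))}
  {φ : ι → (EuclideanSpace ℝ (Fin n) ≃ᵢ EuclideanSpace ℝ (Fin n))}

local notation "𝔼" => EuclideanSpace ℝ (Fin n)

lemma le_packingDensity (hφ : IsPacking K φ) : packingUpperDensity K φ ≤ packingDensity K :=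
  le_iSup₂_of_le ι φ (le_iSup_of_le hφ le_rfl)

lemma IsPacking.mono (hQK : Q ⊆ K) (hφ : IsPacking K φ) : IsPacking Q φ :=
  fun _ _ hij => (hφ hij).mono (interior_mono (image_mono hQK)) (interior_mono (image_mono hQK))

lemma IsPacking.countable (hK : (interior K).Nonempty) (hφ : IsPacking K φ) : Countable ι :=
  hφ.countable_of_isOpen_disjoint (fun _ => isOpen_interior) fun i => by
    rw [← (φ i).coe_toHomeomorph, ← (φ i).toHomeomorph.image_interior]
    exact hK.image _

lemma IsPacking.tsum_volume_image_le (hQ : volume (interior Q) = volume Q)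
    (hφ : IsPacking Q φ) : ∑' i, volume (φ i '' Q) ≤ volume (⋃ i, φ i '' Q) :=
  calc ∑' i, volume (φ i '' Q) = ∑' i, volume (interior (φ i '' Q)) := by
        refine tsum_congr fun i => ?_
        rw [← (φ i).coe_toHomeomorph, ← Homeomorph.image_interior, IsometryEquiv.coe_toHomeomorph,
          (φ i).isometry.volume_image, (φ i).isometry.volume_image, hQ]
    _ ≤ volume (⋃ i, interior (φ i '' Q)) :=
        tsum_meas_le_meas_iUnion_of_disjoint _ (fun _ => isOpen_interior.measurableSet) hφ
    _ ≤ volume (⋃ i, φ i '' Q) := measure_mono (iUnion_mono fun _ => interior_subset)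

lemma isPacking_trans_iff (g : 𝔼 ≃ᵢ 𝔼) :
    IsPacking K (fun i => g.trans (φ i)) ↔ IsPacking (g '' K) φ := by
  simp only [IsPacking, IsometryEquiv.image_trans]

lemma packingUpperDensity_trans (g : 𝔼 ≃ᵢ 𝔼) :
    packingUpperDensity K (fun i => g.trans (φ i)) = packingUpperDensity (g '' K) φ := by
  simp only [packingUpperDensity, IsometryEquiv.image_trans]

lemma IsPacking.smul {a : ℝ} (ha : a ≠ 0) (hφ : IsPacking K φ) :
    IsPacking (a • K) (fun i => (φ i).conjSMul ha) := fun i j hij => by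
  simp only [IsometryEquiv.image_smul_conjSMul, interior_smul₀ ha]
  exact (disjoint_image_iff (smul_right_injective _ ha)).2 (hφ hij)

lemma packingUpperDensity_smul {a : ℝ} (ha : 0 < a) :
    packingUpperDensity (a • K) (fun i => (φ i).conjSMul ha.ne') = packingUpperDensity K φ := by
  set F := fun R => volume ((⋃ i, φ i '' K) ∩ closedBall 0 R) / volume (closedBall (0 : 𝔼) R)
  have hvol (X : Set 𝔼) : volume (a • X) = ENNReal.ofReal (a ^ n) * volume X := by
    rw [Measure.addHaar_smul, finrank_euclideanSpace_fin, abs_of_pos (pow_pos ha n)]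
  have hball (R : ℝ) : closedBall (0 : 𝔼) R = a • closedBall 0 (a⁻¹ * R) := by
    rw [smul_closedBall' ha.ne', smul_zero, Real.norm_of_nonneg ha.le, mul_inv_cancel_left₀ ha.ne']
  have hdens (R : ℝ) : volume ((⋃ i, (φ i).conjSMul ha.ne' '' (a • K)) ∩ closedBall 0 R) /
      volume (closedBall (0 : 𝔼) R) = F (a⁻¹ * R) := by
    simp_rw [IsometryEquiv.image_smul_conjSMul]
    rw [hball R, ← smul_set_iUnion, ← smul_set_inter₀ ha.ne', hvol, hvol]
    exact ENNReal.mul_div_mul_left _ _ (by positivity) ENNReal.ofReal_ne_top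
  have hmap : map (fun R : ℝ => a⁻¹ * R) atTop = atTop :=
    (OrderIso.mulLeft₀ _ (inv_pos.2 ha)).map_atTop
  simp only [packingUpperDensity, hdens]
  rw [← Function.comp_def F, limsup_comp, hmap]

lemma packingUpperDensity_closedBall_le {c : 𝔼} {r : ℝ} (hr : 0 < r)
    (hφ : IsPacking (closedBall c r) φ) :
    packingUpperDensity (closedBall c r) φ ≤ packingDensity (closedBall (0 : 𝔼) 1) := by
  have htrans : IsometryEquiv.addLeft c '' closedBall 0 r = closedBall c r := by
    rw [IsometryEquiv.image_closedBall, IsometryEquiv.addLeft_apply, add_zero]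
  have hunit : r⁻¹ • closedBall (0 : 𝔼) r = closedBall 0 1 := by
    rw [smul_closedBall' (inv_ne_zero hr.ne'), smul_zero, Real.norm_of_nonneg (inv_nonneg.2 hr.le),
      inv_mul_cancel₀ hr.ne']
  rw [← htrans, ← isPacking_trans_iff] at hφ
  rw [← htrans, ← packingUpperDensity_trans, ← packingUpperDensity_smul (inv_pos.2 hr), hunit]
  exact le_packingDensity (hunit ▸ hφ.smul (inv_ne_zero hr.ne'))

lemma volume_iUnion_image_inter_closedBall_le [Countable ι] (hK : IsCompact K) (hQK : Q ⊆ K)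
    (hQ0 : volume Q ≠ 0) (hQint : volume (interior Q) = volume Q) (hφ : IsPacking Q φ) (R : ℝ) :
    volume ((⋃ i, φ i '' K) ∩ closedBall 0 R) ≤
      volume K / volume Q * volume ((⋃ i, φ i '' Q) ∩ closedBall 0 (R + diam K)) := by
  set S := {i | (φ i '' K ∩ closedBall 0 R).Nonempty}
  have hcover : (⋃ i, φ i '' K) ∩ closedBall 0 R ⊆ ⋃ i : S, φ i '' K := by
    rintro x ⟨hx, hxR⟩
    obtain ⟨i, hi⟩ := mem_iUnion.1 hx
    exact mem_iUnion.2 ⟨⟨i, x, hi, hxR⟩, hi⟩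
  have hnear (i : S) : φ i '' Q ⊆ closedBall 0 (R + diam K) := by
    obtain ⟨x, hxK, hxR⟩ := i.2
    refine (image_mono hQK).trans fun y hy => mem_closedBall.2 ?_
    have hdiam : dist y x ≤ diam K := by
      rw [← (φ i).diam_image]
      exact dist_le_diam_of_mem (hK.image (φ i).continuous).isBounded hy hxK
    linarith [dist_triangle y x 0, mem_closedBall.1 hxR]
  have hvol (i : ι) : volume (φ i '' K) = volume K / volume Q * volume (φ i '' Q) := by
    rw [(φ i).isometry.volume_image, (φ i).isometry.volume_image,
      ENNReal.div_mul_cancel hQ0 ((measure_mono hQK).trans_lt hK.measure_lt_top).ne]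
  calc volume ((⋃ i, φ i '' K) ∩ closedBall 0 R)
      ≤ ∑' i : S, volume (φ i '' K) := (measure_mono hcover).trans (measure_iUnion_le _)
    _ = volume K / volume Q * ∑' i : S, volume (φ i '' Q) := by
        simp_rw [hvol, ENNReal.tsum_mul_left]
    _ ≤ volume K / volume Q * volume (⋃ i : S, φ i '' Q) := by
        gcongr
        exact IsPacking.tsum_volume_image_le hQint (hφ.comp_of_injective Subtype.val_injective)
    _ ≤ volume K / volume Q * volume ((⋃ i, φ i '' Q) ∩ closedBall 0 (R + diam K)) := by
        gcongr
        exact iUnion_subset fun i => subset_inter (subset_iUnion_of_subset i.1 subset_rfl) (hnear i)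

lemma packingUpperDensity_le_of_subset (hK : IsCompact K) (hQK : Q ⊆ K) (hQ0 : volume Q ≠ 0)
    (hQint : volume (interior Q) = volume Q) (hφ : IsPacking K φ) :
    packingUpperDensity K φ ≤ volume K / volume Q * packingUpperDensity Q φ := by
  have hφQ := hφ.mono hQK
  have : Countable ι := hφQ.countable (nonempty_of_measure_ne_zero (hQint ▸ hQ0))
  set G := fun R => volume ((⋃ i, φ i '' Q) ∩ closedBall 0 (R + diam K)) /
    volume (closedBall (0 : 𝔼) R)
  calc packingUpperDensity K φ ≤ limsup (fun R => volume K / volume Q * G R) atTop := by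
        refine limsup_le_limsup (.of_forall fun R => ?_)
        dsimp only [G]
        rw [← mul_div_assoc]
        exact ENNReal.div_le_div_right
          (volume_iUnion_image_inter_closedBall_le hK hQK hQ0 hQint hφQ R) _
    _ = volume K / volume Q * limsup G atTop :=
        ENNReal.limsup_const_mul_of_ne_top (ENNReal.div_lt_top hK.measure_lt_top.ne hQ0).ne
    _ ≤ volume K / volume Q * packingUpperDensity Q φ := by
        gcongr
        exact limsup_measure_inter_closedBall_add_div_le volume _ _

end Packing

theorem packingDensity_le_insphere_ratio_general (n : ℕ) (hn : 0 < n)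
    (K : Set (EuclideanSpace ℝ (Fin n))) (hKc : IsCompact K)
    (hKint : (interior K).Nonempty)
    (r : ℝ)
    (hr : r = sSup {ρ : ℝ | 0 ≤ ρ ∧ ∃ c : EuclideanSpace ℝ (Fin n),
      Metric.closedBall c ρ ⊆ K}) :
    packingDensity K ≤
      volume K / (ENNReal.ofReal (r ^ n) *
        volume (Metric.closedBall (0 : EuclideanSpace ℝ (Fin n)) 1)) *
      packingDensity (Metric.closedBall (0 : EuclideanSpace ℝ (Fin n)) 1) := by
  have : Nonempty (Fin n) := ⟨⟨0, hn⟩⟩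
  have hrK : r = inradius K := hr
  obtain ⟨hr0, c, hc⟩ := hKc.exists_closedBall_inradius_subset hKint
  rw [← hrK] at hr0 hc
  have hvol : volume (closedBall c r) =
      ENNReal.ofReal (r ^ n) * volume (closedBall (0 : EuclideanSpace ℝ (Fin n)) 1) := by
    rw [Measure.addHaar_closedBall' _ _ hr0.le, finrank_euclideanSpace_fin]
  have hint : volume (interior (closedBall c r)) = volume (closedBall c r) := by
    rw [interior_closedBall _ hr0.ne', Measure.addHaar_closedBall_eq_addHaar_ball]
  refine iSup₂_le fun ι φ => iSup_le fun hφ => ?_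
  calc packingUpperDensity K φ
      ≤ volume K / volume (closedBall c r) * packingUpperDensity (closedBall c r) φ :=
        packingUpperDensity_le_of_subset hKc hc (measure_closedBall_pos _ _ hr0).ne' hint hφ
    _ ≤ _ := by
        rw [hvol]
        gcongr
        exact packingUpperDensity_closedBall_le hr0 (hφ.mono hc)

/-- For any convex body `K ⊆ ℝⁿ` with inradius `r(K)`, the packing density satisfies
`δ(K) ≤ (vol K / (r(K)ⁿ vol Bⁿ)) δ(Bⁿ)`. -/
theorem packingDensity_le_insphere_ratio (n : ℕ) (hn : 0 < n)
    (K : Set (EuclideanSpace ℝ (Fin n))) (hKc : IsCompact K) (hKconv : Convex ℝ K)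
    (hKint : (interior K).Nonempty)
    (r : ℝ)
    (hr : r = sSup {ρ : ℝ | 0 ≤ ρ ∧ ∃ c : EuclideanSpace ℝ (Fin n),
      Metric.closedBall c ρ ⊆ K}) :
    packingDensity K ≤
      volume K / (ENNReal.ofReal (r ^ n) *
        volume (Metric.closedBall (0 : EuclideanSpace ℝ (Fin n)) 1)) *
      packingDensity (Metric.closedBall (0 : EuclideanSpace ℝ (Fin n)) 1) :=
  packingDensity_le_insphere_ratio_general n hn K hKc hKint r hr
end

section
/- The function f_0(r) = 1 - r²/2 for 0 ≤ r ≤ √2 and f_0(r) = 0 for r > √2 is a Blichfeldt gauge for the unit ball B^n: if {x_i} are centers of a packing of unit balls (pairwise distances ≥ 2), then ∑_i f_0(|x - x_i|) ≤ 1 for all x ∈ R^n. -/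
/-!
Since `f₀ ≥ 0` on `[0, ∞)`, it suffices to bound finite partial sums, and in those only the
points at distance at most `√2` from `x` contribute, each with `f₀(r) = 1 - r²/2`.
Blichfeldt's identity `∑_{i,j} |yᵢ - yⱼ|² = 2m ∑ᵢ |yᵢ|² - 2 |∑ᵢ yᵢ|²` (with `yᵢ = xᵢ - x`) bounds
the `m(m-1)` off-diagonal squared distances, each at least `4`, by `2m ∑ᵢ |x - xᵢ|²`. Hence
`∑ᵢ |x - xᵢ|² ≥ 2(m - 1)`, which is exactly `∑ᵢ (1 - |x - xᵢ|²/2) ≤ 1`.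
-/

open MeasureTheory

/-- Blichfeldt's gauge function `f₀(r) = 1 - r²/2` for `0 ≤ r ≤ √2` and `f₀(r) = 0`
for `r > √2`. -/
noncomputable def blichfeldtF0 (r : ℝ) : ℝ :=
  if r ≤ Real.sqrt 2 then 1 - r ^ 2 / 2 else 0

open Finset

theorem card_mul_card_sub_one_mul_sq_le_sum_sum_dist_sq {α ι : Type*} [PseudoMetricSpace α]
    {s : Finset ι} {y : ι → α} {d : ℝ} (hd : 0 ≤ d)
    (hy : (s : Set ι).Pairwise fun i j => d ≤ dist (y i) (y j)) :
    #s * (#s - 1) * d ^ 2 ≤ ∑ i ∈ s, ∑ j ∈ s, dist (y i) (y j) ^ 2 := by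
  classical
  have h_row : ∀ i ∈ s, (#s - 1) * d ^ 2 ≤ ∑ j ∈ s, dist (y i) (y j) ^ 2 := by
    intro i hi
    have h_far : ∀ j ∈ s.erase i, d ^ 2 ≤ dist (y i) (y j) ^ 2 := fun j hj =>
      pow_le_pow_left₀ hd (hy hi (mem_of_mem_erase hj) (ne_of_mem_erase hj).symm) 2
    have h_card : (#(s.erase i) : ℝ) = #s - 1 := by
      rw [card_erase_of_mem hi, Nat.cast_sub (one_le_card.mpr ⟨i, hi⟩), Nat.cast_one]
    rw [← sum_erase s (f := fun j => dist (y i) (y j) ^ 2) (a := i) (by simp), ← h_card]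
    simpa using card_nsmul_le_sum _ _ _ h_far
  simpa [mul_assoc] using card_nsmul_le_sum _ _ _ h_row

section Blichfeldt

variable {E ι : Type*} [NormedAddCommGroup E] [InnerProductSpace ℝ E] (s : Finset ι) (y : ι → E)

theorem sum_sum_norm_sub_sq :
    ∑ i ∈ s, ∑ j ∈ s, ‖y i - y j‖ ^ 2
      = 2 * #s * ∑ i ∈ s, ‖y i‖ ^ 2 - 2 * ‖∑ i ∈ s, y i‖ ^ 2 := by
  have h_inner : ‖∑ i ∈ s, y i‖ ^ 2 = ∑ i ∈ s, ∑ j ∈ s, inner ℝ (y i) (y j) := by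
    rw [← real_inner_self_eq_norm_sq, sum_inner]
    exact sum_congr rfl fun i _ => inner_sum _ _ _
  simp only [h_inner, norm_sub_sq_real, sum_add_distrib, sum_sub_distrib, sum_const,
    nsmul_eq_mul, ← mul_sum]
  ring

theorem sum_sum_dist_sq_le (c : E) :
    ∑ i ∈ s, ∑ j ∈ s, dist (y i) (y j) ^ 2 ≤ 2 * #s * ∑ i ∈ s, dist (y i) c ^ 2 := by
  have h := sum_sum_norm_sub_sq s (fun i => y i - c)
  simp only [sub_sub_sub_cancel_right, ← dist_eq_norm] at h
  nlinarith [sq_nonneg ‖∑ i ∈ s, (y i - c)‖]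

variable {s y}

theorem card_sub_one_mul_sq_le_sum_dist_sq {d : ℝ} (hd : 0 ≤ d)
    (hy : (s : Set ι).Pairwise fun i j => d ≤ dist (y i) (y j)) (c : E) :
    (#s - 1) * d ^ 2 ≤ 2 * ∑ i ∈ s, dist (y i) c ^ 2 := by
  rcases s.eq_empty_or_nonempty with rfl | hs
  · simp [sq_nonneg]
  have h_card : (0 : ℝ) < #s := by exact_mod_cast hs.card_pos
  have h_le := (card_mul_card_sub_one_mul_sq_le_sum_sum_dist_sq hd hy).trans
    (sum_sum_dist_sq_le s y c)
  exact le_of_mul_le_mul_left (by linarith) h_card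

theorem sum_one_sub_dist_sq_div_two_le_one
    (hy : (s : Set ι).Pairwise fun i j => 2 ≤ dist (y i) (y j)) (x : E) :
    ∑ i ∈ s, (1 - dist x (y i) ^ 2 / 2) ≤ 1 := by
  have h := card_sub_one_mul_sq_le_sum_dist_sq zero_le_two hy x
  simp only [dist_comm (y _) x] at h
  rw [sum_sub_distrib, ← sum_div, sum_const, nsmul_one]
  linarith

end Blichfeldt

theorem blichfeldtF0_nonneg {r : ℝ} (hr : 0 ≤ r) : 0 ≤ blichfeldtF0 r := by
  unfold blichfeldtF0
  split_ifs with h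
  · nlinarith [Real.sq_sqrt zero_le_two, Real.sqrt_nonneg 2]
  · exact le_rfl

theorem sum_blichfeldtF0_le_one {E ι : Type*} [NormedAddCommGroup E] [InnerProductSpace ℝ E]
    (s : Finset ι) {y : ι → E} (hy : Pairwise fun i j => 2 ≤ dist (y i) (y j)) (x : E) :
    ∑ i ∈ s, blichfeldtF0 (dist x (y i)) ≤ 1 := by
  classical
  simp only [blichfeldtF0, ← sum_filter]
  exact sum_one_sub_dist_sq_div_two_le_one (fun i _ j _ hij => hy hij) x

/-- `f₀` is a Blichfeldt gauge for the unit ball: if `(xᵢ)` are the centers of a packing of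
unit balls (pairwise distances at least `2`), then `∑ᵢ f₀(|x - xᵢ|) ≤ 1` for every `x ∈ ℝⁿ`. -/
theorem blichfeldtF0_gauge (n : ℕ) (c : ℕ → EuclideanSpace ℝ (Fin n))
    (hc : Pairwise fun i j => 2 ≤ dist (c i) (c j)) (x : EuclideanSpace ℝ (Fin n)) :
    (∑' i : ℕ, blichfeldtF0 (dist x (c i))) ≤ 1 :=
  Real.tsum_le_of_sum_le (fun _ => blichfeldtF0_nonneg dist_nonneg)
    fun s => sum_blichfeldtF0_le_one s hc x
end

section
/- For the Blichfeldt gauge f*(r) defined by f*(r) = 1 - r²/2 for 1 ≤ r ≤ √2, f*(r) = 1 - (1 - (2-r)²/2) = (2-r)²/2 for 0 ≤ r ≤ 1, and f*(r) = 0 for r > √2, one has I_n(f*) = (2·vol(B^n)/(n+2)) · 2^{n/2} · (1 + b_n), where b_n = 1/(2^{n/2}(n+1)) - (√2 - 1)^{n+1}(1 + √2/(n+1)). -/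
open MeasureTheory

/-- The improved Blichfeldt gauge `f*`, with `f*(r) = f₀(r)` for `r ≥ 1` and
`f*(r) = 1 - f₀(2 - r)` for `0 ≤ r ≤ 1`. -/
noncomputable def blichfeldtFStar (r : ℝ) : ℝ :=
  if r ≤ 1 then 1 - blichfeldtF0 (2 - r) else blichfeldtF0 r

/-!
Polar coordinates reduce `Iₙ(f*)` to `n · vol(Bⁿ) · ∫₀^√2 r^(n-1) f*(r) dr`. On `[0, 2 - √2]`,
`[2 - √2, 1]` and `[1, √2]` the gauge `f*` is the polynomial `1`, `(2 - r)²/2` and `1 - r²/2`, so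
the radial integral is a sum of monomial integrals. The factorisation `2 - √2 = √2 (√2 - 1)` turns
the powers of `2 - √2` this produces into `√2ⁿ (√2 - 1)ⁿ`, the source of the `(√2 - 1)^(n+1)`
term of `bₙ`; what remains is a rational identity in `n` and `√2` modulo `√2² = 2`.
-/

open Real Set intervalIntegral

lemma integral_pow_mul_quadratic (m : ℕ) (a b c₀ c₁ c₂ : ℝ) :
    ∫ x in a..b, x ^ m * (c₀ + c₁ * x + c₂ * x ^ 2) =
      c₀ * (b ^ (m + 1) - a ^ (m + 1)) / (m + 1) + c₁ * (b ^ (m + 2) - a ^ (m + 2)) / (m + 2)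
        + c₂ * (b ^ (m + 3) - a ^ (m + 3)) / (m + 3) := by
  have hint (k : ℕ) (c : ℝ) : IntervalIntegrable (fun x : ℝ => c * x ^ k) volume a b :=
    (continuous_const.mul (continuous_pow k)).intervalIntegrable a b
  have hexpand : (fun x : ℝ => x ^ m * (c₀ + c₁ * x + c₂ * x ^ 2)) =
      fun x => c₀ * x ^ m + c₁ * x ^ (m + 1) + c₂ * x ^ (m + 2) := by
    funext x; ring
  rw [hexpand, integral_add ((hint _ _).add (hint _ _)) (hint _ _),
    integral_add (hint _ _) (hint _ _), intervalIntegral.integral_const_mul,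
    intervalIntegral.integral_const_mul, intervalIntegral.integral_const_mul,
    integral_pow, integral_pow, integral_pow]
  push_cast
  ring

lemma blichfeldtFStar_eq_one {y : ℝ} (hy : y ≤ 2 - √2) :
    blichfeldtFStar y = 1 := by
  have hy1 : y ≤ 1 := hy.trans (by linarith [one_lt_sqrt_two])
  rcases hy.lt_or_eq with hlt | rfl
  · simp [blichfeldtFStar, blichfeldtF0, hy1, show ¬ 2 - y ≤ √2 by linarith]
  · simp [blichfeldtFStar, blichfeldtF0, hy1]

lemma blichfeldtFStar_eq_of_mem_Icc_two_sub_sqrt_two_one {y : ℝ} (hy : y ∈ Icc (2 - √2) 1) :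
    blichfeldtFStar y = (2 - y) ^ 2 / 2 := by
  simp [blichfeldtFStar, blichfeldtF0, hy.2, show 2 - y ≤ √2 by linarith [hy.1]]

lemma blichfeldtFStar_eq_of_mem_Icc_one_sqrt_two {y : ℝ} (hy : y ∈ Icc 1 √2) :
    blichfeldtFStar y = 1 - y ^ 2 / 2 := by
  rcases hy.1.lt_or_eq with hlt | rfl
  · simp [blichfeldtFStar, blichfeldtF0, hy.2, hlt.not_ge]
  · norm_num [blichfeldtFStar, blichfeldtF0, one_lt_sqrt_two.le]

lemma blichfeldtFStar_eq_zero {y : ℝ} (hy : √2 < y) : blichfeldtFStar y = 0 := by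
  simp [blichfeldtFStar, blichfeldtF0, hy.not_ge,
    show ¬ y ≤ 1 by linarith [one_lt_sqrt_two]]

lemma integral_Ioi_pow_mul_blichfeldtFStar_eq_intervalIntegral (m : ℕ) :
    ∫ y in Ioi 0, y ^ m * blichfeldtFStar y = ∫ y in 0..√2, y ^ m * blichfeldtFStar y := by
  rw [integral_of_le (sqrt_nonneg 2),
    setIntegral_eq_of_subset_of_forall_sdiff_eq_zero measurableSet_Ioi Ioc_subset_Ioi_self]
  intro y hy
  have hy' : √2 < y := not_le.mp fun h => hy.2 ⟨hy.1, h⟩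
  rw [blichfeldtFStar_eq_zero hy', mul_zero]

lemma intervalIntegral_pow_mul_blichfeldtFStar (m : ℕ) :
    ∫ y in 0..√2, y ^ m * blichfeldtFStar y =
      (2 - √2) ^ (m + 1) / (m + 1)
      + (2 * (1 - (2 - √2) ^ (m + 1)) / (m + 1) - 2 * (1 - (2 - √2) ^ (m + 2)) / (m + 2)
        + (1 - (2 - √2) ^ (m + 3)) / (2 * (m + 3)))
      + ((√2 ^ (m + 1) - 1) / (m + 1) - (√2 ^ (m + 3) - 1) / (2 * (m + 3))) := by
  have h₁ : 1 < √2 := one_lt_sqrt_two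
  have h₂ : √2 < 2 := by nlinarith [sq_sqrt (zero_le_two : (0 : ℝ) ≤ 2)]
  have piece₁ : EqOn (fun y => y ^ m * blichfeldtFStar y)
      (fun y => y ^ m * (1 + 0 * y + 0 * y ^ 2)) (uIcc 0 (2 - √2)) := fun y hy => by
    rw [uIcc_of_le (by linarith)] at hy
    simp [blichfeldtFStar_eq_one hy.2]
  have piece₂ : EqOn (fun y => y ^ m * blichfeldtFStar y)
      (fun y => y ^ m * (2 + (-2) * y + (1 / 2) * y ^ 2)) (uIcc (2 - √2) 1) := fun y hy => by
    rw [uIcc_of_le (by linarith)] at hy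
    simp only [blichfeldtFStar_eq_of_mem_Icc_two_sub_sqrt_two_one hy]
    ring
  have piece₃ : EqOn (fun y => y ^ m * blichfeldtFStar y)
      (fun y => y ^ m * (1 + 0 * y + (-1 / 2) * y ^ 2)) (uIcc 1 √2) := fun y hy => by
    rw [uIcc_of_le h₁.le] at hy
    simp only [blichfeldtFStar_eq_of_mem_Icc_one_sqrt_two hy]
    ring
  have hint₁ :=
    ((by fun_prop : Continuous _).continuousOn.congr piece₁).intervalIntegrable (μ := volume)
  have hint₂ :=
    ((by fun_prop : Continuous _).continuousOn.congr piece₂).intervalIntegrable (μ := volume)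
  have hint₃ :=
    ((by fun_prop : Continuous _).continuousOn.congr piece₃).intervalIntegrable (μ := volume)
  rw [← integral_add_adjacent_intervals (hint₁.trans hint₂) hint₃,
    ← integral_add_adjacent_intervals hint₁ hint₂, integral_congr piece₁, integral_congr piece₂,
    integral_congr piece₃, integral_pow_mul_quadratic, integral_pow_mul_quadratic,
    integral_pow_mul_quadratic]
  field_simp
  ring

theorem integral_Ioi_pow_mul_blichfeldtFStar (n : ℕ) (hn : 1 ≤ n) :
    ∫ y in Ioi 0, y ^ (n - 1) * blichfeldtFStar y =
      2 / (n * (n + 2)) * √2 ^ n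
        * (1 + (1 / (√2 ^ n * (n + 1)) - (√2 - 1) ^ (n + 1) * (1 + √2 / (n + 1)))) := by
  obtain ⟨m, rfl⟩ := Nat.exists_eq_add_of_le' hn
  rw [Nat.add_sub_cancel, integral_Ioi_pow_mul_blichfeldtFStar_eq_intervalIntegral,
    intervalIntegral_pow_mul_blichfeldtFStar]
  have hs0 : √2 ≠ 0 := (sqrt_pos.2 two_pos).ne'
  set s := √2
  have hs : s ^ 2 = 2 := sq_sqrt zero_le_two
  have hfactor : 2 - s = s * (s - 1) := by linear_combination -hs
  have hpow₁ : (2 - s) ^ (m + 1) = s ^ (m + 1) * (s - 1) ^ (m + 1) := by rw [hfactor, mul_pow]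
  have hpow₂ : (2 - s) ^ (m + 2) = (2 - s) * (s ^ (m + 1) * (s - 1) ^ (m + 1)) := by
    rw [pow_succ, hpow₁, mul_comm]
  have hpow₃ : (2 - s) ^ (m + 3) = (6 - 4 * s) * (s ^ (m + 1) * (s - 1) ^ (m + 1)) := by
    rw [show (2 - s) ^ (m + 3) = (2 - s) ^ 2 * (2 - s) ^ (m + 1) by ring, hpow₁]
    linear_combination (s ^ (m + 1) * (s - 1) ^ (m + 1)) * hs
  have hs3 : s ^ (m + 3) = 2 * s ^ (m + 1) := by rw [← hs]; ring
  -- the only `s²` left after these substitutions; reducing it leaves a rational identity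
  have htail : (s - 1) ^ (m + 1 + 1) * (1 + s / (↑(m + 1) + 1)) =
      (s - 1) ^ (m + 1) * ((s - 1) + (2 - s) / (↑(m + 1) + 1)) := by
    rw [pow_succ]
    linear_combination ((s - 1) ^ (m + 1) / (↑(m + 1) + 1)) * hs
  rw [hpow₁, hpow₂, hpow₃, hs3, htail]
  push_cast
  field_simp
  ring

/-- For the Blichfeldt gauge `f*` one has
`Iₙ(f*) = (2 vol(Bⁿ)/(n+2)) · 2^{n/2} · (1 + bₙ)`, where
`bₙ = 1/(2^{n/2}(n+1)) - (√2-1)^{n+1}(1 + √2/(n+1))`. -/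
theorem integral_blichfeldtFStar (n : ℕ) (hn : 1 ≤ n) :
    (∫ x : EuclideanSpace ℝ (Fin n), blichfeldtFStar ‖x‖)
      = 2 * (volume (Metric.closedBall (0 : EuclideanSpace ℝ (Fin n)) 1)).toReal / ((n : ℝ) + 2)
        * (2 : ℝ) ^ ((n : ℝ) / 2)
        * (1 + (1 / ((2 : ℝ) ^ ((n : ℝ) / 2) * ((n : ℝ) + 1))
            - (Real.sqrt 2 - 1) ^ (n + 1) * (1 + Real.sqrt 2 / ((n : ℝ) + 1)))) := by
  have : NeZero n := ⟨by omega⟩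
  rw [Measure.addHaar_closedBall_eq_addHaar_ball, integral_fun_norm_addHaar,
    finrank_euclideanSpace_fin]
  simp only [smul_eq_mul, nsmul_eq_mul]
  rw [integral_Ioi_pow_mul_blichfeldtFStar n hn, rpow_div_two_eq_sqrt _ zero_le_two,
    rpow_natCast, measureReal_def]
  field_simp
end

section
/- If K is a convex body in R^n and f is a Blichfeldt gauge for the unit ball B^n, then for any 0 < ρ ≤ r(K) the function g_ρ(x) = f(d(x, K_{-ρ})/ρ) is a Blichfeldt gauge for K, i.e., for any packing {φ_i K} by isometries one has ∑_i g_ρ(φ_i^{-1}(x)) ≤ 1 for all x. -/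
/-!
Pick in each copy `φᵢ K` the image `pᵢ = φᵢ zᵢ` of a point `zᵢ ∈ K₋ρ` nearest to `φᵢ⁻¹ x`.
The open balls of radius `ρ` around the `pᵢ` lie in the disjoint interiors of the copies, so
`‖pᵢ - pⱼ‖ ≥ 2ρ`; after scaling by `ρ⁻¹` the points `pᵢ / ρ` are centers of a unit-ball packing,
and `d(φᵢ⁻¹ x, K₋ρ)/ρ = |x/ρ - pᵢ/ρ|`, so the gauge inequality for `Bⁿ` at `x/ρ` is the claim.
-/

open MeasureTheory

open Metric

theorem isClosed_setOf_closedBall_subset {E : Type*} [SeminormedAddCommGroup E] {K : Set E}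
    (hK : IsClosed K) (ρ : ℝ) : IsClosed {z : E | closedBall z ρ ⊆ K} := by
  have hS : {z : E | closedBall z ρ ⊆ K} = ⋂ v ∈ closedBall (0 : E) ρ, (· + v) ⁻¹' K := by
    ext z
    simp only [Set.mem_ofPred_eq, Set.mem_iInter, Set.mem_preimage, mem_closedBall,
      dist_zero_right]
    refine ⟨fun h v hv => h (by simpa using hv), fun h y hy => ?_⟩
    simpa using h (y - z) (by rwa [← dist_eq_norm])
  rw [hS]
  exact isClosed_biInter fun v _ => hK.preimage (continuous_add_const v)

theorem IsometryEquiv.ball_subset_interior_image {α : Type*} [PseudoMetricSpace α]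
    (φ : α ≃ᵢ α) {K : Set α} {z : α} {ρ : ℝ} (hz : closedBall z ρ ⊆ K) :
    ball (φ z) ρ ⊆ interior (φ '' K) :=
  interior_maximal (by rw [← φ.image_ball]; exact Set.image_mono (ball_subset_closedBall.trans hz))
    isOpen_ball

theorem IsPacking.two_mul_le_dist {n : ℕ} {K : Set (EuclideanSpace ℝ (Fin n))} {ι : Type}
    {φ : ι → (EuclideanSpace ℝ (Fin n) ≃ᵢ EuclideanSpace ℝ (Fin n))} (hφ : IsPacking K φ)
    {ρ : ℝ} (hρ : 0 < ρ) {z : ι → EuclideanSpace ℝ (Fin n)} (hz : ∀ i, closedBall (z i) ρ ⊆ K) :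
    Pairwise fun i j => 2 * ρ ≤ dist (φ i (z i)) (φ j (z j)) := fun i j hij => by
  dsimp only
  rw [two_mul, ← disjoint_ball_ball_iff hρ hρ]
  exact (hφ hij).mono ((φ i).ball_subset_interior_image (hz i))
    ((φ j).ball_subset_interior_image (hz j))

theorem dist_inv_smul_inv_smul {E : Type*} [SeminormedAddCommGroup E] [NormedSpace ℝ E]
    {ρ : ℝ} (hρ : 0 ≤ ρ) (x y : E) : dist (ρ⁻¹ • x) (ρ⁻¹ • y) = dist x y / ρ := by
  rw [dist_smul₀, Real.norm_of_nonneg (inv_nonneg.mpr hρ), inv_mul_eq_div]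

theorem gauge_transfer_general (n : ℕ) (f : ℝ → ℝ)
    (hgauge : ∀ c : ℕ → EuclideanSpace ℝ (Fin n),
      (Pairwise fun i j => 2 ≤ dist (c i) (c j)) →
      ∀ x : EuclideanSpace ℝ (Fin n), (∑' i : ℕ, f (dist x (c i))) ≤ 1)
    (K : Set (EuclideanSpace ℝ (Fin n))) (hKc : IsCompact K)
    (ρ : ℝ) (hρ : 0 < ρ) (hρK : ∃ c : EuclideanSpace ℝ (Fin n), Metric.closedBall c ρ ⊆ K)
    (φ : ℕ → (EuclideanSpace ℝ (Fin n) ≃ᵢ EuclideanSpace ℝ (Fin n)))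
    (hφ : IsPacking K φ) (x : EuclideanSpace ℝ (Fin n)) :
    (∑' i : ℕ,
        f (Metric.infDist ((φ i).symm x) {z : EuclideanSpace ℝ (Fin n) |
          Metric.closedBall z ρ ⊆ K} / ρ)) ≤ 1 := by
  choose z hzK hz using fun i =>
    (isClosed_setOf_closedBall_subset hKc.isClosed ρ).exists_infDist_eq_dist hρK ((φ i).symm x)
  have hcenters : Pairwise fun i j => 2 ≤ dist (ρ⁻¹ • φ i (z i)) (ρ⁻¹ • φ j (z j)) :=
    fun i j hij => by
      dsimp only
      rw [dist_inv_smul_inv_smul hρ.le, le_div_iff₀ hρ]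
      exact hφ.two_mul_le_dist hρ hzK hij
  calc _ = ∑' i : ℕ, f (dist (ρ⁻¹ • x) (ρ⁻¹ • φ i (z i))) := tsum_congr fun i => by
        rw [hz i, dist_inv_smul_inv_smul hρ.le, ← (φ i).dist_eq, IsometryEquiv.apply_symm_apply]
    _ ≤ 1 := hgauge _ hcenters _

/-- If `f` is a Blichfeldt gauge for the unit ball `Bⁿ` (that is, for every packing of unit
balls with centers `cᵢ` one has `∑ᵢ f(|x - cᵢ|) ≤ 1`, with `f` nonnegative, measurable and of
finite integral), `K` is a convex body, and `0 < ρ ≤ r(K)` (i.e. some ball of radius `ρ` fits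
inside `K`), then `g_ρ(x) = f(d(x, K₋ρ)/ρ)` is a Blichfeldt gauge for `K`: for every packing
`{φᵢ K}` by isometries, `∑ᵢ g_ρ(φᵢ⁻¹(x)) ≤ 1` for all `x`. -/
theorem gauge_transfer (n : ℕ) (f : ℝ → ℝ)
    (hf0 : ∀ r, 0 ≤ f r) (hfm : Measurable f)
    (hfi : Integrable fun x : EuclideanSpace ℝ (Fin n) => f ‖x‖)
    (hgauge : ∀ c : ℕ → EuclideanSpace ℝ (Fin n),
      (Pairwise fun i j => 2 ≤ dist (c i) (c j)) →
      ∀ x : EuclideanSpace ℝ (Fin n), (∑' i : ℕ, f (dist x (c i))) ≤ 1)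
    (K : Set (EuclideanSpace ℝ (Fin n))) (hKc : IsCompact K) (hKconv : Convex ℝ K)
    (hKint : (interior K).Nonempty)
    (ρ : ℝ) (hρ : 0 < ρ) (hρK : ∃ c : EuclideanSpace ℝ (Fin n), Metric.closedBall c ρ ⊆ K)
    (φ : ℕ → (EuclideanSpace ℝ (Fin n) ≃ᵢ EuclideanSpace ℝ (Fin n)))
    (hφ : IsPacking K φ) (x : EuclideanSpace ℝ (Fin n)) :
    (∑' i : ℕ,
        f (Metric.infDist ((φ i).symm x) {z : EuclideanSpace ℝ (Fin n) |
          Metric.closedBall z ρ ⊆ K} / ρ)) ≤ 1 :=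
  gauge_transfer_general n f hgauge K hKc ρ hρ hρK φ hφ x
end

section
/- Let K ⊂ R^n be a convex body and f : [0,∞) → [0,∞) measurable with compact support. Then ∫_{R^n} f(d(x, K)/ρ) dx = ∑_{j=0}^{n} ρ^j · I_j(f) · V_{n-j}(K), where I_j(f) = ∫_{R^j} f(|x|)dx for j ≥ 1, I_0(f) = f(0), and V_j denote the intrinsic volumes. -/
/-!
Push volume forward along `x ↦ d(x, K)` to a measure `ν` on `ℝ`, and along `y ↦ ‖y‖` on `ℝʲ` to a
measure `μⱼ`. The Steiner formula says that the distribution function of `ν` is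
`t ↦ ∑ⱼ V_{n-j}(K) tʲ κⱼ = ∑ⱼ V_{n-j}(K) μⱼ(-∞, t]`, so after moving the terms with negative
coefficients to the other side, `ν` and the `μⱼ` satisfy an identity between finite measures
(once restricted to the support of the integrand). Integrating `s ↦ f(s/ρ)` against it gives the
formula, since `∫ f(‖y‖/ρ) dy = ρʲ Iⱼ(f)` by scaling.
-/

open MeasureTheory Set Metric
open scoped ENNReal

namespace MeasureTheory.Measure

theorem map_apply_Iic_of_neg {α : Type*} [MeasurableSpace α] (μ : Measure α) {f : α → ℝ}
    (hf : Measurable f) (hf0 : ∀ x, 0 ≤ f x) {t : ℝ} (ht : t < 0) :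
    μ.map f (Iic t) = 0 := by
  rw [map_apply hf measurableSet_Iic]
  convert measure_empty (μ := μ)
  exact eq_empty_of_forall_notMem fun x hx => (hf0 x).not_gt (lt_of_le_of_lt hx ht)

theorem measureReal_finsetSum_apply {α ι : Type*} [MeasurableSpace α] (s : Finset ι)
    (μ : ι → Measure α) [∀ i, IsFiniteMeasure (μ i)] (t : Set α) :
    (∑ i ∈ s, μ i).real t = ∑ i ∈ s, (μ i).real t := by
  simp only [measureReal_def, finsetSum_apply,
    ENNReal.toReal_sum fun i _ => measure_ne_top (μ i) t]

section Real

variable {ι : Type*} {s : Finset ι} {ν : Measure ℝ} {μ : ι → Measure ℝ} {c : ι → ℝ}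

theorem add_sum_smul_eq_sum_smul_of_measureReal_Iic_eq [IsFiniteMeasure ν]
    [∀ i, IsFiniteMeasure (μ i)]
    (hcdf : ∀ t, ν.real (Iic t) = ∑ i ∈ s, c i * (μ i).real (Iic t)) :
    ν + ∑ i ∈ s, (-c i).toNNReal • μ i = ∑ i ∈ s, (c i).toNNReal • μ i := by
  refine ext_of_Iic _ _ fun t => ?_
  rw [← ENNReal.toReal_eq_toReal_iff' (measure_ne_top _ _) (measure_ne_top _ _),
    ← measureReal_def, ← measureReal_def, measureReal_add_apply, measureReal_finsetSum_apply,
    measureReal_finsetSum_apply, hcdf, ← Finset.sum_add_distrib]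
  refine Finset.sum_congr rfl fun i _ => ?_
  rw [measureReal_nnreal_smul_apply, measureReal_nnreal_smul_apply, Real.coe_toNNReal',
    Real.coe_toNNReal']
  linear_combination (-(μ i).real (Iic t)) * max_zero_sub_max_neg_zero_eq_self (c i)

theorem integral_eq_sum_mul_integral_of_measureReal_Iic_eq [IsFiniteMeasure ν]
    [∀ i, IsFiniteMeasure (μ i)]
    (hcdf : ∀ t, ν.real (Iic t) = ∑ i ∈ s, c i * (μ i).real (Iic t))
    {g : ℝ → ℝ} (hgm : Measurable g) {M : ℝ} (hgM : ∀ x, ‖g x‖ ≤ M) :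
    ∫ x, g x ∂ν = ∑ i ∈ s, c i * ∫ x, g x ∂μ i := by
  have hint (m : Measure ℝ) [IsFiniteMeasure m] : Integrable g m :=
    .of_bound hgm.aestronglyMeasurable M (ae_of_all _ hgM)
  have h := congrArg (∫ x, g x ∂·) (add_sum_smul_eq_sum_smul_of_measureReal_Iic_eq hcdf)
  simp only [integral_add_measure (hint _) (hint _), integral_finsetSum_measure fun i _ => hint _,
    integral_smul_nnreal_measure, NNReal.smul_def, Real.coe_toNNReal', smul_eq_mul] at h
  rw [eq_sub_of_add_eq h, ← Finset.sum_sub_distrib]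
  refine Finset.sum_congr rfl fun i _ => ?_
  rw [← sub_mul, max_zero_sub_max_neg_zero_eq_self]

theorem integral_eq_sum_mul_integral_of_measureReal_Iic_eq_of_eq_zero_of_lt {b : ℝ}
    (hν : ν (Iic b) ≠ ∞) (hμ : ∀ i, μ i (Iic b) ≠ ∞)
    (hcdf : ∀ t ≤ b, ν.real (Iic t) = ∑ i ∈ s, c i * (μ i).real (Iic t))
    {g : ℝ → ℝ} (hgm : Measurable g) {M : ℝ} (hgM : ∀ x, ‖g x‖ ≤ M)
    (hgb : ∀ x, b < x → g x = 0) :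
    ∫ x, g x ∂ν = ∑ i ∈ s, c i * ∫ x, g x ∂μ i := by
  have hrestrict (m : Measure ℝ) : ∫ x, g x ∂m = ∫ x in Iic b, g x ∂m :=
    (setIntegral_eq_integral_of_forall_compl_eq_zero fun x hx => hgb x (not_le.1 hx)).symm
  have := isFiniteMeasure_restrict.2 hν
  have := fun i => isFiniteMeasure_restrict.2 (hμ i)
  rw [hrestrict ν, Finset.sum_congr rfl fun i _ => by rw [hrestrict (μ i)]]
  refine integral_eq_sum_mul_integral_of_measureReal_Iic_eq (fun t => ?_) hgm hgM
  simp only [measureReal_restrict_apply measurableSet_Iic, Iic_inter_Iic]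
  exact hcdf _ (min_le_right _ _)

end Real

section NormedSpace

variable {E : Type*} [NormedAddCommGroup E] [MeasurableSpace E] [BorelSpace E] (μ : Measure E)

theorem map_norm_apply_Iic (t : ℝ) : μ.map norm (Iic t) = μ (closedBall 0 t) := by
  rw [map_apply measurable_norm measurableSet_Iic]
  congr 1
  ext x
  simp

variable [NormedSpace ℝ E] [FiniteDimensional ℝ E] [μ.IsAddHaarMeasure]

theorem measureReal_map_norm_Iic {t : ℝ} (ht : 0 ≤ t) :
    (μ.map norm).real (Iic t) = t ^ Module.finrank ℝ E * μ.real (closedBall 0 1) := by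
  rw [measureReal_def, map_norm_apply_Iic, addHaar_closedBall' μ 0 ht, ENNReal.toReal_mul,
    ENNReal.toReal_ofReal (by positivity), measureReal_def]

theorem integral_comp_norm_div (f : ℝ → ℝ) {ρ : ℝ} (hρ : 0 ≤ ρ) :
    ∫ x, f (‖x‖ / ρ) ∂μ = ρ ^ Module.finrank ℝ E * ∫ x, f ‖x‖ ∂μ := by
  simpa only [norm_smul, norm_inv, Real.norm_of_nonneg hρ, inv_mul_eq_div, smul_eq_mul] using
    μ.integral_comp_inv_smul_of_nonneg (fun x => f ‖x‖) hρ

end NormedSpace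

end MeasureTheory.Measure

theorem measure_setOf_infDist_le_lt_top {α : Type*} [PseudoMetricSpace α] [ProperSpace α]
    [MeasurableSpace α] (μ : Measure α) [IsFiniteMeasureOnCompacts μ] {K : Set α}
    (hK : Bornology.IsBounded K) (hne : K.Nonempty) (t : ℝ) :
    μ {x | infDist x K ≤ t} < ∞ := by
  obtain ⟨y, hy⟩ := hne
  refine lt_of_le_of_lt (measure_mono fun x (hx : infDist x K ≤ t) => ?_)
    (measure_closedBall_lt_top (x := y) (r := t + diam K))
  rw [mem_closedBall]
  linarith [dist_le_infDist_add_diam (x := x) hK hy]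

theorem measureReal_map_infDist_Iic_eq_sum {n : ℕ} {K : Set (EuclideanSpace ℝ (Fin n))}
    {V : ℕ → ℝ}
    (hV : ∀ lam : ℝ, 0 ≤ lam →
      (volume {x : EuclideanSpace ℝ (Fin n) | infDist x K ≤ lam}).toReal
        = ∑ j ∈ Finset.range (n + 1), lam ^ (n - j) *
            (volume (closedBall (0 : EuclideanSpace ℝ (Fin (n - j))) 1)).toReal * V j)
    (t : ℝ) :
    ((volume : Measure (EuclideanSpace ℝ (Fin n))).map (infDist · K)).real (Iic t)
      = ∑ j ∈ Finset.range (n + 1),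
          V (n - j) * ((volume : Measure (EuclideanSpace ℝ (Fin j))).map norm).real (Iic t) := by
  have hdist : Measurable (infDist · K) := (continuous_infDist_pt K).measurable
  rcases lt_or_ge t 0 with ht | ht
  · refine Eq.trans ?_ (Finset.sum_eq_zero fun j _ => ?_).symm
    · simp [measureReal_def, Measure.map_apply_Iic_of_neg _ hdist (fun _ => infDist_nonneg) ht]
    · simp [measureReal_def, Measure.map_apply_Iic_of_neg _ measurable_norm
        (fun x : EuclideanSpace ℝ (Fin j) => norm_nonneg x) ht]
  · rw [measureReal_def, Measure.map_apply hdist measurableSet_Iic]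
    refine (hV t ht).trans ?_
    rw [← Finset.sum_range_reflect]
    refine Finset.sum_congr rfl fun j hj => ?_
    rw [Measure.measureReal_map_norm_Iic _ ht, finrank_euclideanSpace_fin, measureReal_def,
      add_tsub_cancel_right, Nat.sub_sub_self (Finset.mem_range_succ_iff.1 hj)]
    ring

theorem integral_gauge_steiner_general (n : ℕ) (K : Set (EuclideanSpace ℝ (Fin n)))
    (hKc : IsCompact K) (hKint : (interior K).Nonempty)
    (f : ℝ → ℝ) (hf0 : ∀ r, 0 ≤ f r) (hfm : Measurable f)
    (M : ℝ) (hfb : ∀ r, f r ≤ M)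
    (r0 : ℝ) (hsupp : ∀ r, r0 < r → f r = 0)
    (ρ : ℝ) (hρ : 0 < ρ)
    (V : ℕ → ℝ)
    (hV : ∀ lam : ℝ, 0 ≤ lam →
      (volume {x : EuclideanSpace ℝ (Fin n) | Metric.infDist x K ≤ lam}).toReal
        = ∑ j ∈ Finset.range (n + 1), lam ^ (n - j) *
            (volume (Metric.closedBall (0 : EuclideanSpace ℝ (Fin (n - j))) 1)).toReal * V j) :
    (∫ x : EuclideanSpace ℝ (Fin n), f (Metric.infDist x K / ρ))
      = ∑ j ∈ Finset.range (n + 1), ρ ^ j *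
          (∫ y : EuclideanSpace ℝ (Fin j), f ‖y‖) * V (n - j) := by
  have hdist : Measurable (infDist · K) := (continuous_infDist_pt K).measurable
  set ν := (volume : Measure (EuclideanSpace ℝ (Fin n))).map (infDist · K)
  set μ := fun j => (volume : Measure (EuclideanSpace ℝ (Fin j))).map norm
  have hν : ν (Iic (ρ * r0)) ≠ ∞ := by
    rw [Measure.map_apply hdist measurableSet_Iic]
    exact (measure_setOf_infDist_le_lt_top volume hKc.isBounded
      (hKint.mono interior_subset) _).ne
  have hμ (j : ℕ) : μ j (Iic (ρ * r0)) ≠ ∞ := by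
    simp only [μ, Measure.map_norm_apply_Iic]
    exact measure_closedBall_lt_top.ne
  have hgm : Measurable fun s => f (s / ρ) := hfm.comp (measurable_div_const ρ)
  have hgM (s : ℝ) : ‖f (s / ρ)‖ ≤ M := by simpa [abs_of_nonneg (hf0 _)] using hfb (s / ρ)
  have hgb (s : ℝ) (hs : ρ * r0 < s) : f (s / ρ) = 0 :=
    hsupp _ (by rwa [lt_div_iff₀ hρ, mul_comm])
  have hg := Measure.integral_eq_sum_mul_integral_of_measureReal_Iic_eq_of_eq_zero_of_lt hν hμ
    (fun t _ => measureReal_map_infDist_Iic_eq_sum hV t) hgm hgM hgb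
  rw [integral_map hdist.aemeasurable hgm.aestronglyMeasurable] at hg
  rw [hg]
  refine Finset.sum_congr rfl fun j _ => ?_
  rw [integral_map measurable_norm.aemeasurable hgm.aestronglyMeasurable,
    Measure.integral_comp_norm_div _ _ hρ.le, finrank_euclideanSpace_fin]
  ring

/-- The generalized Steiner formula: if `K ⊆ ℝⁿ` is a convex body, `f : [0,∞) → [0,∞)` is
measurable, bounded and compactly supported, and the `Vⱼ` are the intrinsic volumes of `K`
(defined via the Steiner formula `vol(K + λBⁿ) = ∑ⱼ λ^{n-j} κ_{n-j} Vⱼ(K)`), then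
`∫_{ℝⁿ} f(d(x,K)/ρ) dx = ∑_{j=0}^{n} ρʲ Iⱼ(f) V_{n-j}(K)`, where `Iⱼ(f) = ∫_{ℝʲ} f(|x|) dx`
(and `I₀(f) = f(0)`, which is the integral over the one-point space `ℝ⁰`). -/
theorem integral_gauge_steiner (n : ℕ) (K : Set (EuclideanSpace ℝ (Fin n)))
    (hKc : IsCompact K) (hKconv : Convex ℝ K) (hKint : (interior K).Nonempty)
    (f : ℝ → ℝ) (hf0 : ∀ r, 0 ≤ f r) (hfm : Measurable f)
    (M : ℝ) (hfb : ∀ r, f r ≤ M)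
    (r0 : ℝ) (hsupp : ∀ r, r0 < r → f r = 0)
    (ρ : ℝ) (hρ : 0 < ρ)
    (V : ℕ → ℝ)
    (hV : ∀ lam : ℝ, 0 ≤ lam →
      (volume {x : EuclideanSpace ℝ (Fin n) | Metric.infDist x K ≤ lam}).toReal
        = ∑ j ∈ Finset.range (n + 1), lam ^ (n - j) *
            (volume (Metric.closedBall (0 : EuclideanSpace ℝ (Fin (n - j))) 1)).toReal * V j) :
    (∫ x : EuclideanSpace ℝ (Fin n), f (Metric.infDist x K / ρ))
      = ∑ j ∈ Finset.range (n + 1), ρ ^ j *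
          (∫ y : EuclideanSpace ℝ (Fin j), f ‖y‖) * V (n - j) :=
  integral_gauge_steiner_general n K hKc hKint f hf0 hfm M hfb r0 hsupp ρ hρ V hV
end
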